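/- arXiv:2212.06020 — 4 statements merged into one kernel-verified Lean document; each statement's English description precedes it below -/
import Mathlib

section
/- Let G be a group acting sharply 2-transitively on a set X. If u and v are two distinct involutions of G, then there is no point x ∈ X with u·x = x and v·x = x. -/
/-!
If the involutions `u ≠ v` both fix `x`, pick `y ≠ x`. Both `u` and `v` move `y`, so some `g` fixes
`y` and sends `u • y` to `v • y`; then `g * u * g⁻¹` and `v` swap the same two points `y` and
`v • y`, hence are equal. The fixed point `x` of `v` then gives the fixed point `g⁻¹ • x` of `u`,
which must be `x` itself since a nontrivial element fixes at most one point. So `g` fixes both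
`x` and `y`, i.e. `g = 1` and `u = v`.
-/

/-- An involution of a group is an element of order 2. -/
def IsInvolution {G : Type*} [Monoid G] (g : G) : Prop := orderOf g = 2

/-- A group `G` acts sharply 2-transitively on `X` if `X` has at least two elements and
any pair of distinct points of `X` is sent to any other such pair by a unique element of `G`. -/
def SharplyTwoTransitive (G X : Type*) [Group G] [MulAction G X] : Prop :=
  Nontrivial X ∧ ∀ x₁ x₂ y₁ y₂ : X, x₁ ≠ x₂ → y₁ ≠ y₂ →
    ∃! g : G, g • x₁ = y₁ ∧ g • x₂ = y₂

namespace IsInvolution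

variable {G : Type*} [Group G] {u : G}

theorem ne_one (hu : IsInvolution u) : u ≠ 1 := by
  rintro rfl
  simp [IsInvolution] at hu

theorem mul_self (hu : IsInvolution u) : u * u = 1 := by
  rw [← sq, ← hu, pow_orderOf_eq_one]

theorem smul_smul_self {X : Type*} [MulAction G X] (hu : IsInvolution u) (x : X) :
    u • u • x = x := by
  rw [smul_smul, hu.mul_self, one_smul]

end IsInvolution

namespace SharplyTwoTransitive

variable {G X : Type*} [Group G] [MulAction G X]

theorem eq_of_smul_eq_of_smul_eq (h : SharplyTwoTransitive G X) {g g' : G} {x y : X}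
    (hxy : x ≠ y) (hx : g • x = g' • x) (hy : g • y = g' • y) : g = g' :=
  (h.2 x y (g' • x) (g' • y) hxy ((MulAction.injective g').ne hxy)).unique ⟨hx, hy⟩ ⟨rfl, rfl⟩

theorem eq_one_of_smul_eq_self_of_smul_eq_self (h : SharplyTwoTransitive G X) {g : G}
    {x y : X} (hxy : x ≠ y) (hx : g • x = x) (hy : g • y = y) : g = 1 :=
  h.eq_of_smul_eq_of_smul_eq hxy (by rwa [one_smul]) (by rwa [one_smul])

theorem eq_of_smul_eq_self_of_ne_one (h : SharplyTwoTransitive G X) {g : G} (hg : g ≠ 1)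
    {x y : X} (hx : g • x = x) (hy : g • y = y) : y = x :=
  by_contra fun hyx ↦ hg (h.eq_one_of_smul_eq_self_of_smul_eq_self (Ne.symm hyx) hx hy)

theorem exists_smul_eq_self_and_conj_eq (h : SharplyTwoTransitive G X) {u v : G}
    (hu : IsInvolution u) (hv : IsInvolution v) {y : X} (huy : u • y ≠ y) (hvy : v • y ≠ y) :
    ∃ g : G, g • y = y ∧ g * u * g⁻¹ = v := by
  obtain ⟨g, ⟨hgy, hgu⟩, -⟩ := h.2 y (u • y) y (v • y) huy.symm hvy.symm
  have hg'y : g⁻¹ • y = y := inv_smul_eq_iff.mpr hgy.symm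
  have hg'v : g⁻¹ • v • y = u • y := inv_smul_eq_iff.mpr hgu.symm
  refine ⟨g, hgy, h.eq_of_smul_eq_of_smul_eq hvy.symm ?_ ?_⟩
  · rw [mul_smul, mul_smul, hg'y, hgu]
  · rw [mul_smul, mul_smul, hg'v, hu.smul_smul_self, hgy, hv.smul_smul_self]

end SharplyTwoTransitive

/-- Two distinct involutions of a sharply 2-transitive group cannot have a common
fixed point. -/
theorem stmt_3 {G X : Type*} [Group G] [MulAction G X]
    (h2t : SharplyTwoTransitive G X) (u v : G)
    (hu : IsInvolution u) (hv : IsInvolution v) (huv : u ≠ v) :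
    ¬ ∃ x : X, u • x = x ∧ v • x = x := by
  rintro ⟨x, hux, hvx⟩
  have := h2t.1
  obtain ⟨y, hyx⟩ := exists_ne x
  have huy : u • y ≠ y := fun h ↦ hyx (h2t.eq_of_smul_eq_self_of_ne_one hu.ne_one hux h)
  have hvy : v • y ≠ y := fun h ↦ hyx (h2t.eq_of_smul_eq_self_of_ne_one hv.ne_one hvx h)
  obtain ⟨g, hgy, rfl⟩ := h2t.exists_smul_eq_self_and_conj_eq hu hv huy hvy
  have hug'x : u • g⁻¹ • x = g⁻¹ • x := by
    rwa [mul_smul, mul_smul, ← eq_inv_smul_iff] at hvx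
  have hgx : g • x = x :=
    (inv_smul_eq_iff.mp (h2t.eq_of_smul_eq_self_of_ne_one hu.ne_one hux hug'x)).symm
  obtain rfl := h2t.eq_one_of_smul_eq_self_of_smul_eq_self hyx.symm hgx hgy
  exact huv (by group)
end

section
/- Let G be a group acting sharply 2-transitively on a set X. If u and v are two distinct involutions of G, then the element uv has no fixed point in X. -/
theorem IsInvolution.mul_self_eq_one {G : Type*} [Monoid G] {u : G} (hu : IsInvolution u) :
    u * u = 1 := by
  rw [← pow_two, ← hu, pow_orderOf_eq_one]

theorem IsInvolution.ne_one_s4 {G : Type*} [Monoid G] {u : G} (hu : IsInvolution u) : u ≠ 1 := by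
  rintro rfl
  simp [IsInvolution] at hu

theorem smul_smul_of_mul_self_eq_one {G X : Type*} [Group G] [MulAction G X] {u : G}
    (hu : u * u = 1) (x : X) : u • u • x = x := by
  rw [smul_smul, hu, one_smul]

namespace SharplyTwoTransitive

variable {G X : Type*} [Group G] [MulAction G X]

theorem eq_of_smul_eq_of_smul_eq_s4 (h : SharplyTwoTransitive G X) {g k : G} {a b : X}
    (hab : a ≠ b) (ha : g • a = k • a) (hb : g • b = k • b) : g = k :=
  (h.2 a b (k • a) (k • b) hab ((MulAction.injective k).ne hab)).unique ⟨ha, hb⟩ ⟨rfl, rfl⟩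

theorem eq_one_of_smul_eq_self (h : SharplyTwoTransitive G X) {g : G} {a b : X}
    (hab : a ≠ b) (ha : g • a = a) (hb : g • b = b) : g = 1 :=
  h.eq_of_smul_eq_of_smul_eq_s4 hab (by rwa [one_smul]) (by rwa [one_smul])

/-- Both involutions swap `z` and `u • z`. -/
theorem eq_of_mul_self_eq_one_of_smul_eq (h : SharplyTwoTransitive G X) {u v : G}
    (hu : u * u = 1) (hv : v * v = 1) {z : X} (hz : u • z ≠ z) (huv : u • z = v • z) :
    u = v := by
  refine h.eq_of_smul_eq_of_smul_eq_s4 hz.symm huv ?_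
  rw [smul_smul_of_mul_self_eq_one hu, huv, smul_smul_of_mul_self_eq_one hv]

theorem eq_of_mul_self_eq_one_of_smul_eq_self (h : SharplyTwoTransitive G X) {u v : G}
    (hu : u * u = 1) (hv : v * v = 1) (hu1 : u ≠ 1) (hv1 : v ≠ 1) {x : X}
    (hux : u • x = x) (hvx : v • x = x) : u = v := by
  obtain ⟨z, hzx⟩ := @exists_ne X h.1 x
  have huz : u • z ≠ z := fun hz => hu1 (h.eq_one_of_smul_eq_self hzx hz hux)
  have hvz : v • z ≠ z := fun hz => hv1 (h.eq_one_of_smul_eq_self hzx hz hvx)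
  obtain ⟨g, ⟨hgz, hgu⟩, -⟩ := h.2 z (u • z) z (v • z) huz.symm hvz.symm
  have hconj_sq : (g * u * g⁻¹) * (g * u * g⁻¹) = 1 := by
    simp only [mul_assoc, inv_mul_cancel_left, ← mul_assoc u u, hu, one_mul, mul_inv_cancel]
  have hgz' : g⁻¹ • z = z := inv_smul_eq_iff.mpr hgz.symm
  have hconj_z : (g * u * g⁻¹) • z = v • z := by rw [mul_smul, mul_smul, hgz', hgu]
  have hconj : g * u * g⁻¹ = v :=
    h.eq_of_mul_self_eq_one_of_smul_eq hconj_sq hv (hconj_z ▸ hvz) hconj_z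
  have hvgx : v • g • x = g • x := by
    rw [← hconj, mul_smul, mul_smul, inv_smul_smul, hux]
  have hgx : g • x = x := by
    by_contra hne
    exact hv1 (h.eq_one_of_smul_eq_self hne hvgx hvx)
  rw [← hconj, h.eq_one_of_smul_eq_self hzx hgz hgx, one_mul, inv_one, mul_one]

end SharplyTwoTransitive

/-- The product of two distinct involutions of a sharply 2-transitive group cannot fix
a point. -/
theorem stmt_4 {G X : Type*} [Group G] [MulAction G X]
    (h2t : SharplyTwoTransitive G X) (u v : G)
    (hu : IsInvolution u) (hv : IsInvolution v) (huv : u ≠ v) :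
    ∀ x : X, (u * v) • x ≠ x := by
  intro x hx
  have hvx : v • x = u • x := by
    rw [← smul_smul_of_mul_self_eq_one hu.mul_self_eq_one (v • x), smul_smul u v, hx]
  by_cases hux : u • x = x
  · exact huv (h2t.eq_of_mul_self_eq_one_of_smul_eq_self hu.mul_self_eq_one
      hv.mul_self_eq_one hu.ne_one_s4 hv.ne_one_s4 hux (hvx.trans hux))
  · exact huv (h2t.eq_of_mul_self_eq_one_of_smul_eq hu.mul_self_eq_one hv.mul_self_eq_one
      hux hvx.symm)
end

section
/- Let G be a group acting sharply 2-transitively on a set X with at least 4 elements. If the action is not of characteristic 2 (i.e., some involution of G has a fixed point in X), then there exist four elements of G that are pairwise non-conjugate; in particular G has at least four conjugacy classes. -/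
open MulAction

theorem isInvolution_iff {M : Type*} [Monoid M] {g : M} : IsInvolution g ↔ g * g = 1 ∧ g ≠ 1 := by
  rw [IsInvolution, orderOf_eq_prime_iff, pow_two]

section Conj

variable {G : Type*} [Group G]

theorem IsConj.mul_self_eq_one {g g' : G} (hc : IsConj g g') (hg : g * g = 1) : g' * g' = 1 := by
  have := hc.pow 2
  rwa [pow_two, pow_two, hg, isConj_one_right] at this

theorem IsConj.fixedBy_nonempty {X : Type*} [MulAction G X] {g g' : G} (hc : IsConj g g')
    (hg : (fixedBy X g).Nonempty) : (fixedBy X g').Nonempty := by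
  obtain ⟨k, rfl⟩ := isConj_iff.1 hc
  rw [← smul_fixedBy]
  exact hg.smul_set

theorem four_le_mk_conjClasses {g₁ g₂ g₃ g₄ : G} (h₁₂ : ¬IsConj g₁ g₂) (h₁₃ : ¬IsConj g₁ g₃)
    (h₁₄ : ¬IsConj g₁ g₄) (h₂₃ : ¬IsConj g₂ g₃) (h₂₄ : ¬IsConj g₂ g₄) (h₃₄ : ¬IsConj g₃ g₄) :
    4 ≤ Cardinal.mk (ConjClasses G) := by
  classical
  let s : Finset (ConjClasses G) := {.mk g₁, .mk g₂, .mk g₃, .mk g₄}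
  have hs : s.card = 4 := by
    simp only [s]
    rw [Finset.card_insert_of_notMem, Finset.card_insert_of_notMem, Finset.card_pair] <;>
      simp only [Finset.mem_insert, Finset.mem_singleton, ne_eq, ConjClasses.mk_eq_mk_iff_isConj,
        not_or] <;>
      tauto
  calc (4 : Cardinal) = Cardinal.mk s := by simp [hs]
    _ ≤ _ := Cardinal.mk_subtype_le _

end Conj

namespace SharplyTwoTransitive

variable {G X : Type*} [Group G] [MulAction G X]

theorem exists_smul_eq_smul_eq (h : SharplyTwoTransitive G X) {x₁ x₂ y₁ y₂ : X} (hx : x₁ ≠ x₂)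
    (hy : y₁ ≠ y₂) : ∃ g : G, g • x₁ = y₁ ∧ g • x₂ = y₂ :=
  (h.2 x₁ x₂ y₁ y₂ hx hy).exists

theorem eq_of_smul_eq_smul (h : SharplyTwoTransitive G X) {g g' : G} {x₁ x₂ : X} (hx : x₁ ≠ x₂)
    (h₁ : g • x₁ = g' • x₁) (h₂ : g • x₂ = g' • x₂) : g = g' :=
  (h.2 x₁ x₂ _ _ hx ((MulAction.injective g').ne hx)).unique ⟨h₁, h₂⟩ ⟨rfl, rfl⟩

theorem eq_one_of_smul_eq_self_s5 (h : SharplyTwoTransitive G X) {g : G} {x₁ x₂ : X} (hx : x₁ ≠ x₂)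
    (h₁ : g • x₁ = x₁) (h₂ : g • x₂ = x₂) : g = 1 :=
  h.eq_of_smul_eq_smul hx (by rwa [one_smul]) (by rwa [one_smul])

theorem exists_smul_ne_self (h : SharplyTwoTransitive G X) {g : G} (hg : g ≠ 1) :
    ∃ x : X, g • x ≠ x := by
  obtain ⟨x₁, x₂, hx⟩ := h.1
  by_contra! hfix
  exact hg (h.eq_one_of_smul_eq_self_s5 hx (hfix x₁) (hfix x₂))

theorem exists_isInvolution_swap (h : SharplyTwoTransitive G X) {x y : X} (hxy : x ≠ y) :
    ∃ w : G, IsInvolution w ∧ w • x = y ∧ w • y = x := by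
  obtain ⟨w, hwx, hwy⟩ := h.exists_smul_eq_smul_eq hxy hxy.symm
  refine ⟨w, isInvolution_iff.2 ⟨?_, ?_⟩, hwx, hwy⟩
  · exact h.eq_one_of_smul_eq_self_s5 hxy (by rw [mul_smul, hwx, hwy]) (by rw [mul_smul, hwy, hwx])
  · rintro rfl
    exact hxy (one_smul G x ▸ hwx)

theorem isConj_of_isInvolution (h : SharplyTwoTransitive G X) {v w : G} (hv : IsInvolution v)
    (hw : IsInvolution w) : IsConj v w := by
  rw [isInvolution_iff] at hv hw
  obtain ⟨a, ha⟩ := h.exists_smul_ne_self (X := X) hv.2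
  obtain ⟨b, hb⟩ := h.exists_smul_ne_self (X := X) hw.2
  obtain ⟨g, hga, hgva⟩ := h.exists_smul_eq_smul_eq (Ne.symm ha) (Ne.symm hb)
  refine isConj_iff.2 ⟨g, h.eq_of_smul_eq_smul (Ne.symm hb) ?_ ?_⟩
  · rw [← hgva, ← hga, mul_smul, mul_smul, inv_smul_smul]
  · rw [smul_smul w w, hw.1, one_smul, ← hgva, mul_smul, mul_smul, inv_smul_smul, smul_smul v v,
      hv.1, one_smul, hga]

theorem fixedBy_mul_eq_empty (h : SharplyTwoTransitive G X) {i j : G} (hi : IsInvolution i)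
    (hj : IsInvolution j) {x y : X} (hxy : x ≠ y) (hix : i • x = x) (hjy : j • y = y) :
    fixedBy X (i * j) = ∅ := by
  rw [isInvolution_iff] at hi hj
  refine Set.eq_empty_iff_forall_notMem.2 fun z (hz : (i * j) • z = z) => ?_
  have hjz : j • z = i • z := by
    nth_rw 2 [← hz]
    rw [smul_smul, ← mul_assoc, hi.1, one_mul]
  by_cases hjz' : j • z = z
  · have hzx : z = x := by
      by_contra hzx
      exact hi.2 (h.eq_one_of_smul_eq_self_s5 hzx (hjz ▸ hjz') hix)
    exact hj.2 (h.eq_one_of_smul_eq_self_s5 hxy (hzx ▸ hjz') hjy)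
  · -- `i` and `j` both swap `z` and `j • z`
    have hij : i = j := h.eq_of_smul_eq_smul (Ne.symm hjz') hjz.symm
      (by rw [smul_smul, hz, smul_smul, hj.1, one_smul])
    exact hi.2 (h.eq_one_of_smul_eq_self_s5 hxy hix (hij ▸ hjy))

theorem smul_eq_of_forall_mul_self_eq_one (h : SharplyTwoTransitive G X)
    (hsq : ∀ g : G, (fixedBy X g).Nonempty → g * g = 1) {x y m : X} {w : G} (hxy : x ≠ y)
    (hwx : w • x = y) (hwy : w • y = x) (hwm : w • m = m) {a : G} (hax : a • x = x)
    (ha : a ≠ 1) : a • y = m := by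
  have hw₁ : w⁻¹ • y = x := by rw [inv_smul_eq_iff, hwx]
  have hw₂ : w⁻¹ • x = y := by rw [inv_smul_eq_iff, hwy]
  obtain ⟨c, hc⟩ : ∃ c, c = w * a * w⁻¹ := ⟨_, rfl⟩
  have hcy : c • y = y := by rw [hc, mul_smul, mul_smul, hw₁, hax, hwx]
  have hc₁ : c ≠ 1 := by rwa [hc, Ne, conj_eq_one_iff]
  obtain ⟨P, hP⟩ : ∃ P, P = c • x := ⟨_, rfl⟩
  have hPx : P ≠ x := fun hPx => hc₁ (h.eq_one_of_smul_eq_self_s5 hxy (hP ▸ hPx) hcy)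
  have hcP : c • P = x := by rw [hP, smul_smul, hsq c ⟨y, hcy⟩, one_smul]
  obtain ⟨d, hdx, hdy⟩ := h.exists_smul_eq_smul_eq hxy hPx.symm
  have hd₁ : d⁻¹ • x = x := by rw [inv_smul_eq_iff, hdx]
  have hd₂ : d⁻¹ • P = y := by rw [inv_smul_eq_iff, hdy]
  -- both `c` and the conjugate `d w d⁻¹` swap `x` and `P`
  have hcd : c = d * w * d⁻¹ := h.eq_of_smul_eq_smul hPx.symm
    (by rw [← hP, mul_smul, mul_smul, hd₁, hwx, hdy])
    (by rw [hcP, mul_smul, mul_smul, hd₂, hwy, hdx])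
  have hdm : d • m = y := by
    by_contra hne
    refine hc₁ (h.eq_one_of_smul_eq_self_s5 hne ?_ hcy)
    rw [hcd, mul_smul, mul_smul, inv_smul_smul, hwm]
  have hPm : P = m := by rw [← hdy, ← hdm, smul_smul, hsq d ⟨x, hdx⟩, one_smul]
  calc a • y = w⁻¹ • P := by rw [hP, hc, mul_smul, mul_smul, hw₂, inv_smul_smul]
    _ = m := by rw [hPm, inv_smul_eq_iff, hwm]

theorem exists_fixedBy_nonempty_mul_self_ne_one (h : SharplyTwoTransitive G X)
    (hX : ∃ a b c d : X, a ≠ b ∧ a ≠ c ∧ a ≠ d ∧ b ≠ c ∧ b ≠ d ∧ c ≠ d)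
    (hinv : ∀ v : G, IsInvolution v → (fixedBy X v).Nonempty) :
    ∃ g : G, (fixedBy X g).Nonempty ∧ g * g ≠ 1 := by
  by_contra! hsq
  obtain ⟨x, y, p, q, hxy, hxp, hxq, hyp, hyq, hpq⟩ := hX
  obtain ⟨w, hw, hwx, hwy⟩ := h.exists_isInvolution_swap hxy
  obtain ⟨m, hm⟩ := hinv w hw
  obtain ⟨a, hax, hay⟩ := h.exists_smul_eq_smul_eq hxy hxp
  obtain ⟨b, hbx, hby⟩ := h.exists_smul_eq_smul_eq hxy hxq
  have ha : a ≠ 1 := by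
    rintro rfl
    exact hyp (one_smul G y ▸ hay)
  have hb : b ≠ 1 := by
    rintro rfl
    exact hyq (one_smul G y ▸ hby)
  rw [← hay, ← hby, h.smul_eq_of_forall_mul_self_eq_one hsq hxy hwx hwy hm hax ha,
    h.smul_eq_of_forall_mul_self_eq_one hsq hxy hwx hwy hm hbx hb] at hpq
  exact hpq rfl

theorem exists_fixedBy_eq_empty (h : SharplyTwoTransitive G X) {u : G} (hu : IsInvolution u)
    {x : X} (hux : u • x = x) (hinv : ∀ v : G, IsInvolution v → (fixedBy X v).Nonempty) :
    ∃ f : G, fixedBy X f = ∅ := by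
  have : Nontrivial X := h.1
  obtain ⟨y, hyx⟩ := exists_ne x
  obtain ⟨w, hw, hwx, -⟩ := h.exists_isInvolution_swap hyx.symm
  obtain ⟨m, hm : w • m = m⟩ := hinv w hw
  have hxm : x ≠ m := by
    rintro rfl
    exact hyx (hwx.symm.trans hm)
  exact ⟨u * w, h.fixedBy_mul_eq_empty hu hw hxm hux hm⟩

end SharplyTwoTransitive

/-- If `G` acts sharply 2-transitively on a set `X` with at least 4 elements and the action
is not of characteristic 2 (some involution has a fixed point), then `G` contains four
pairwise non-conjugate elements; in particular `G` has at least four conjugacy classes. -/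
theorem stmt_5 {G X : Type*} [Group G] [MulAction G X]
    (h2t : SharplyTwoTransitive G X)
    (hX : ∃ a b c d : X, a ≠ b ∧ a ≠ c ∧ a ≠ d ∧ b ≠ c ∧ b ≠ d ∧ c ≠ d)
    (hchar : ∃ (u : G) (x : X), IsInvolution u ∧ u • x = x) :
    (∃ g₁ g₂ g₃ g₄ : G, ¬ IsConj g₁ g₂ ∧ ¬ IsConj g₁ g₃ ∧ ¬ IsConj g₁ g₄ ∧
      ¬ IsConj g₂ g₃ ∧ ¬ IsConj g₂ g₄ ∧ ¬ IsConj g₃ g₄) ∧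
    4 ≤ Cardinal.mk (ConjClasses G) := by
  obtain ⟨u, x, hu, hux⟩ := hchar
  have hinv : ∀ v : G, IsInvolution v → (fixedBy X v).Nonempty := fun v hv =>
    (h2t.isConj_of_isInvolution hu hv).fixedBy_nonempty ⟨x, hux⟩
  obtain ⟨c, hc, hcc⟩ := h2t.exists_fixedBy_nonempty_mul_self_ne_one hX hinv
  obtain ⟨f, hf⟩ := h2t.exists_fixedBy_eq_empty hu hux hinv
  have hu' := isInvolution_iff.1 hu
  have h₁₂ : ¬IsConj 1 u := fun hc' => hu'.2 (isConj_one_right.1 hc')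
  have h₁₃ : ¬IsConj 1 c := fun hc' => hcc (hc'.mul_self_eq_one (mul_one 1))
  have h₁₄ : ¬IsConj 1 f := fun hc' => (hc'.fixedBy_nonempty ⟨x, one_smul G x⟩).ne_empty hf
  have h₂₃ : ¬IsConj u c := fun hc' => hcc (hc'.mul_self_eq_one hu'.1)
  have h₂₄ : ¬IsConj u f := fun hc' => (hc'.fixedBy_nonempty ⟨x, hux⟩).ne_empty hf
  have h₃₄ : ¬IsConj c f := fun hc' => (hc'.fixedBy_nonempty hc).ne_empty hf
  exact ⟨⟨1, u, c, f, h₁₂, h₁₃, h₁₄, h₂₃, h₂₄, h₃₄⟩,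
    four_le_mk_conjClasses h₁₂ h₁₃ h₁₄ h₂₃ h₂₄ h₃₄⟩
end

section
/- Let G be a group in which every finite subgroup has order at most 2. Then every infinite virtually cyclic subgroup of G is isomorphic to ℤ, to ℤ × ℤ/2ℤ, or to the infinite dihedral group D_ℤ = ℤ ⋊ ℤ/2ℤ. -/
/-
Pick `z` of infinite order with `⟨z⟩` normal of finite index. If `z` is central, the transfer
`G → ⟨z⟩ ≅ ℤ` is `x ↦ x ^ [G : ⟨z⟩]`; its kernel is the set of torsion elements, a subgroup meeting
`⟨z⟩` trivially, hence finite, of order at most 2 and central, and then `G ≅ ℤ × ker`.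
Otherwise some `s` inverts `z`. Then `s` is an involution, the centralizer `N` of `z` has index 2,
and the central case applies to `N`. Its torsion part is trivial: a nontrivial torsion element of
`N` would commute with `s` and generate with it a Klein four-group. So `N = ⟨w⟩` with `s` inverting
`w`, which presents `G` as `D_∞`.
-/

/-- A group is virtually cyclic if it has a cyclic subgroup of finite index. -/
def VirtuallyCyclic (H : Type*) [Group H] : Prop :=
  ∃ K : Subgroup H, IsCyclic K ∧ K.FiniteIndex

def FiniteSubgroupsCardLe (G : Type*) [Group G] (n : ℕ) : Prop :=
  ∀ F : Subgroup G, Finite F → Nat.card F ≤ n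

section

open Subgroup

variable {G : Type*} [Group G]

theorem eq_of_ne_one_of_card_le_two [Finite G] (hG : Nat.card G ≤ 2) {a b : G}
    (ha : a ≠ 1) (hb : b ≠ 1) : a = b := by
  by_contra hab
  have h3 : ({1, a, b} : Set G).ncard = 3 := by
    rw [Set.ncard_insert_of_notMem (by simp [ha.symm, hb.symm]), Set.ncard_pair hab]
  have := Set.ncard_le_ncard (Set.subset_univ ({1, a, b} : Set G))
  rw [Set.ncard_univ] at this
  omega

theorem conj_eq_self_or_eq_inv {g x : G} (hg : ¬IsOfFinOrder g) (h₁ : x * g * x⁻¹ ∈ zpowers g)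
    (h₂ : x⁻¹ * g * x ∈ zpowers g) : x * g * x⁻¹ = g ∨ x * g * x⁻¹ = g⁻¹ := by
  obtain ⟨a, ha⟩ := mem_zpowers_iff.mp h₁
  obtain ⟨b, hb⟩ := mem_zpowers_iff.mp h₂
  have hab : g ^ (a * b) = g ^ (1 : ℤ) := by
    rw [mul_comm, zpow_mul, hb, show x⁻¹ * g * x = x⁻¹ * g * x⁻¹⁻¹ by rw [inv_inv], conj_zpow, ha]
    group
  rcases Int.eq_one_or_neg_one_of_mul_eq_one
    (injective_zpow_iff_not_isOfFinOrder.mpr hg hab) with rfl | rfl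
  · exact .inl (by rw [← ha, zpow_one])
  · exact .inr (by rw [← ha, zpow_neg_one])

theorem eq_one_of_commute_of_conj_eq_inv {g x y : G} (hg : ¬IsOfFinOrder g)
    (hx : x * g * x⁻¹ = g⁻¹) (hy : y ∈ zpowers g) (hxy : Commute x y) : y = 1 := by
  obtain ⟨k, rfl⟩ := mem_zpowers_iff.mp hy
  have : g ^ (-k) = g ^ k := by
    rw [zpow_neg, ← inv_zpow, ← hx, conj_zpow, hxy.eq, mul_inv_cancel_right]
  have hk : k = 0 := by
    have := injective_zpow_iff_not_isOfFinOrder.mpr hg this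
    omega
  rw [hk, zpow_zero]

theorem Subgroup.finite_of_disjoint {F Z : Subgroup G} [Z.FiniteIndex] (h : Disjoint F Z) :
    Finite F := by
  have hbot : Z.subgroupOf F = ⊥ := subgroupOf_eq_bot.mpr h.symm
  have := (Z.subgroupOf F).index_ne_zero_of_finite
  rw [hbot, index_bot] at this
  exact Nat.finite_of_card_ne_zero this

theorem Subgroup.le_center_of_card_le_two (T : Subgroup G) [T.Normal] [Finite T]
    (hT : Nat.card T ≤ 2) : T ≤ center G := by
  refine fun t ht => mem_center_iff.mpr fun x => ?_
  by_cases ht1 : t = 1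
  · simp [ht1]
  have hconj := eq_of_ne_one_of_card_le_two hT (a := ⟨_, Normal.conj_mem ‹_› t ht x⟩)
    (b := ⟨t, ht⟩) (by simpa [Subtype.ext_iff] using ht1) (by simpa [Subtype.ext_iff] using ht1)
  exact mul_inv_eq_iff_eq_mul.mp (congrArg Subtype.val hconj)

theorem Subgroup.exists_monoidHom_pow_index (Z : Subgroup G) [Z.FiniteIndex]
    (hZ : Z ≤ center G) : ∃ f : G →* Z, ∀ x, (f x : G) = x ^ Z.index := by
  let _ : CommGroup Z :=
    { mul_comm := fun a b => Subtype.ext (mem_center_iff.mp (hZ b.2) a) }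
  refine ⟨MonoidHom.transfer (MonoidHom.id Z), fun x => ?_⟩
  rw [MonoidHom.transfer_eq_pow _ x fun k g₀ hk => ?_]
  · rfl
  · conv_rhs => rw [show x ^ k = g₀ * (g₀⁻¹ * x ^ k * g₀) * g₀⁻¹ by group]
    rw [mem_center_iff.mp (hZ hk) g₀, mul_inv_cancel_right]

theorem exists_monoidHom_int_ker_iff_isOfFinOrder {g : G} (hgc : g ∈ center G)
    (hg : ¬IsOfFinOrder g) [(zpowers g).FiniteIndex] :
    ∃ φ : G →* Multiplicative ℤ, ∀ x, x ∈ φ.ker ↔ IsOfFinOrder x := by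
  obtain ⟨f, hf⟩ := (zpowers g).exists_monoidHom_pow_index (zpowers_le.mpr hgc)
  have : Infinite (zpowers g) := (infinite_zpowers.mpr hg).to_subtype
  refine ⟨intCyclicMulEquiv.symm.toMonoidHom.comp f, fun x => ⟨fun hx => ?_, fun hx => ?_⟩⟩
  · have hfx : f x = 1 := by simpa using hx
    refine isOfFinOrder_iff_pow_eq_one.mpr ⟨_, (zpowers g).index_ne_zero_of_finite.bot_lt, ?_⟩
    rw [← hf, hfx, OneMemClass.coe_one]
  · exact (MonoidHom.isOfFinOrder _ hx).eq_one'

theorem MonoidHom.nonempty_mulEquiv_int_prod_ker (φ : G →* Multiplicative ℤ) (hφ : φ ≠ 1)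
    (hker : φ.ker ≤ center G) : Nonempty (G ≃* Multiplicative ℤ × φ.ker) := by
  obtain ⟨⟨_, w, rfl⟩, hw⟩ := IsCyclic.exists_generator (α := φ.range)
  have hpow : ∀ x, ∃ k : ℤ, φ x = φ w ^ k := fun x => by
    obtain ⟨k, hk⟩ := mem_zpowers_iff.mp (hw ⟨φ x, x, rfl⟩)
    exact ⟨k, (congrArg Subtype.val hk).symm⟩
  have hw1 : φ w ≠ 1 := fun h => hφ <| MonoidHom.ext fun x => by
    obtain ⟨k, hk⟩ := hpow x
    rw [hk, h, one_zpow, MonoidHom.one_apply]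
  let Ψ := (zpowersHom G w).noncommCoprod φ.ker.subtype
    fun k t => mem_center_iff.mp (hker t.2) _
  have hΨ : ∀ k t, Ψ (k, t) = w ^ k.toAdd * t := fun _ _ => rfl
  have hinj : Function.Injective Ψ := by
    refine (injective_iff_map_eq_one Ψ).mpr fun ⟨k, t⟩ h => ?_
    rw [hΨ] at h
    have hk : φ w ^ k.toAdd = 1 := by
      simpa [(MonoidHom.mem_ker).mp t.2] using congrArg φ h
    rw [IsMulTorsionFree.zpow_eq_one_iff_right hw1] at hk
    have ht : t = 1 := by
      ext; simpa [hk] using h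
    rw [ht, Prod.mk_eq_one, ← toAdd_eq_zero, hk]
    simp
  have hsurj : Function.Surjective Ψ := fun x => by
    obtain ⟨k, hk⟩ := hpow x
    refine ⟨(.ofAdd k, ⟨w ^ (-k) * x, ?_⟩), ?_⟩
    · rw [MonoidHom.mem_ker, map_mul, hk, map_zpow, zpow_neg, inv_mul_cancel]
    · rw [hΨ, toAdd_ofAdd, ← mul_assoc, zpow_neg, mul_inv_cancel, one_mul]
  exact ⟨(MulEquiv.ofBijective Ψ ⟨hinj, hsurj⟩).symm⟩

theorem Subgroup.exists_zpowers_eq_of_mulEquiv_int (N : Subgroup G) (e : N ≃* Multiplicative ℤ) :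
    ∃ w : G, ¬IsOfFinOrder w ∧ zpowers w = N := by
  refine ⟨e.symm (.ofAdd 1), fun hw => ?_, ?_⟩
  · have := (e.toMonoidHom.isOfFinOrder (Submonoid.isOfFinOrder_coe.mp hw)).eq_one'
    simp at this
  · refine le_antisymm (zpowers_le.mpr (e.symm _).2) fun n hn => ?_
    have hpow : e.symm (.ofAdd 1) ^ (e ⟨n, hn⟩).toAdd = ⟨n, hn⟩ :=
      e.injective (by simp [← ofAdd_zsmul])
    exact mem_zpowers_iff.mpr ⟨_, congrArg Subtype.val hpow⟩

theorem nonempty_mulEquiv_dihedralGroup_zero {w s : G} (hw : ¬IsOfFinOrder w) (hs : s * s = 1)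
    (hsw : s * w * s⁻¹ = w⁻¹) (hsN : s ∉ zpowers w)
    (hcover : ∀ x, x ∈ zpowers w ∨ s * x ∈ zpowers w) : Nonempty (G ≃* DihedralGroup 0) := by
  have hws : ∀ k : ℤ, w ^ k * s = s * w ^ (-k) := fun k => by
    rw [zpow_neg, ← inv_zpow, ← hsw, conj_zpow, inv_eq_of_mul_eq_one_right hs, ← mul_assoc,
      ← mul_assoc, hs, one_mul]
  have hr_sr : ∀ i j : ℤ, s * w ^ (j - i) = w ^ i * (s * w ^ j) := fun i j => by
    rw [← mul_assoc, hws, mul_assoc, ← zpow_add, sub_eq_neg_add]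
  have hsr_sr : ∀ i j : ℤ, w ^ (j - i) = s * w ^ i * (s * w ^ j) := fun i j => by
    rw [mul_assoc, ← hr_sr, ← mul_assoc, hs, one_mul]
  have hsr_r : ∀ i j : ℤ, s * w ^ (i + j) = s * w ^ i * w ^ j := fun i j => by
    rw [mul_assoc, zpow_add]
  -- `ZMod 0` is `ℤ` by definition, so these patterns bind integers.
  let Φ : DihedralGroup 0 →* G :=
    { toFun := fun
        | .r (i : ℤ) => w ^ i
        | .sr (i : ℤ) => s * w ^ i
      map_one' := zpow_zero w
      map_mul' := by
        rintro (i | i) (j | j)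
        exacts [zpow_add w i j, hr_sr i j, hsr_r i j, hsr_sr i j] }
  have hinj : Function.Injective Φ := by
    refine (injective_iff_map_eq_one Φ).mpr ?_
    rintro (i | i) h
    · exact congrArg DihedralGroup.r (injective_zpow_iff_not_isOfFinOrder.mpr hw
        (h.trans (zpow_zero w).symm))
    · exact absurd (eq_inv_of_mul_eq_one_left h ▸ inv_mem (zpow_mem_zpowers w _)) hsN
  have hsurj : Function.Surjective Φ := fun x => by
    rcases hcover x with hx | hx <;> obtain ⟨k, hk⟩ := mem_zpowers_iff.mp hx
    · exact ⟨.r k, hk⟩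
    · exact ⟨.sr k, show s * w ^ k = x by rw [hk, ← mul_assoc, hs, one_mul]⟩
  exact ⟨(MulEquiv.ofBijective Φ ⟨hinj, hsurj⟩).symm⟩

theorem VirtuallyCyclic.exists_zpowers [Infinite G] (hvc : VirtuallyCyclic G) :
    ∃ z : G, ¬IsOfFinOrder z ∧ (zpowers z).Normal ∧ (zpowers z).FiniteIndex := by
  obtain ⟨K, hK, hKfi⟩ := hvc
  have : IsCyclic K.normalCore := isCyclic_of_le K.normalCore_le
  obtain ⟨z, hz⟩ := K.normalCore.isCyclic_iff_exists_zpowers_eq_top.mp this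
  have hinf : Infinite K.normalCore := not_finite_iff_infinite.mp fun hfin =>
    ((finite_iff_finite_and_finiteIndex K.normalCore).mpr ⟨hfin, inferInstance⟩).false
  refine ⟨z, infinite_zpowers.mp ?_, hz ▸ inferInstance, hz ▸ inferInstance⟩
  rw [hz]
  exact Set.infinite_coe_iff.mp hinf

section NormalZPowers

variable {z : G} (hz : ¬IsOfFinOrder z) [(zpowers z).Normal]
include hz

theorem conj_eq_self_or_eq_inv_of_normal (x : G) : x * z * x⁻¹ = z ∨ x * z * x⁻¹ = z⁻¹ :=
  conj_eq_self_or_eq_inv hz (Normal.conj_mem ‹_› z (mem_zpowers z) x)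
    (by simpa using Normal.conj_mem ‹_› z (mem_zpowers z) x⁻¹)

theorem exists_conj_eq_inv (hzc : z ∉ center G) : ∃ s : G, s * z * s⁻¹ = z⁻¹ := by
  obtain ⟨s, hs⟩ := not_forall.mp (mt mem_center_iff.mpr hzc)
  exact ⟨s, (conj_eq_self_or_eq_inv_of_normal hz s).resolve_left
    fun h => hs (mul_inv_eq_iff_eq_mul.mp h)⟩

end NormalZPowers

section ConjInv

variable {z s : G} (hs : s * z * s⁻¹ = z⁻¹)
include hs

theorem notMem_centralizer_of_conj_eq_inv (hz : ¬IsOfFinOrder z) : s ∉ centralizer {z} := by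
  intro hsN
  have hzz : z⁻¹ = z := by rw [← hs, mem_centralizer_singleton_iff.mp hsN, mul_inv_cancel_right]
  exact hz (isOfFinOrder_iff_pow_eq_one.mpr
    ⟨2, two_pos, by rw [sq]; exact mul_eq_one_iff_eq_inv.mpr hzz.symm⟩)

theorem conj_mem_centralizer_of_conj_eq_inv {n : G} (hn : n ∈ centralizer {z}) :
    s * n * s⁻¹ ∈ centralizer {z} := by
  have hnz : Commute n z := mem_centralizer_singleton_iff.mp hn
  have := hnz.map (MulAut.conj s)
  simp only [MulAut.conj_apply, hs] at this
  exact mem_centralizer_singleton_iff.mpr (Commute.inv_right_iff.mp this)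

theorem mem_centralizer_or_mul_mem_centralizer (hz : ¬IsOfFinOrder z) [(zpowers z).Normal]
    (x : G) : x ∈ centralizer {z} ∨ s * x ∈ centralizer {z} := by
  simp only [mem_centralizer_singleton_iff, ← mul_inv_eq_iff_eq_mul]
  refine (conj_eq_self_or_eq_inv_of_normal hz x).imp_right fun hx => ?_
  rw [mul_inv_rev, show s * x * z * (x⁻¹ * s⁻¹) = s * (x * z * x⁻¹) * s⁻¹ by group, hx,
    ← conj_inv, hs, inv_inv]

end ConjInv

namespace FiniteSubgroupsCardLe

theorem subgroup {n : ℕ} (h : FiniteSubgroupsCardLe G n) (K : Subgroup G) :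
    FiniteSubgroupsCardLe K n := fun F _ => by
  have e := F.equivMapOfInjective _ K.subtype_injective
  have := h (F.map K.subtype) (Finite.of_equiv _ e.toEquiv)
  rwa [← Nat.card_congr e.toEquiv] at this

section

variable (h : FiniteSubgroupsCardLe G 2)
include h

theorem pow_two_eq_one {x : G} (hx : IsOfFinOrder x) : x ^ 2 = 1 := by
  have : Finite (zpowers x) := (finite_zpowers.mpr hx).to_subtype
  have hle := h (zpowers x) this
  rw [Nat.card_zpowers] at hle
  interval_cases hk : orderOf x
  · exact absurd hk hx.orderOf_pos.ne'
  · rw [orderOf_eq_one_iff.mp hk, one_pow]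
  · rw [← hk, pow_orderOf_eq_one]

theorem eq_of_commute {a b : G} (hab : Commute a b) (ha : a ^ 2 = 1) (hb : b ^ 2 = 1) :
    a = 1 ∨ b = 1 ∨ a = b := by
  have hnorm : zpowers a ≤ normalizer (zpowers b) := zpowers_le.mpr <| mem_normalizer_iff.mpr
    fun x => by
      have hconj : ∀ k : ℤ, a * b ^ k * a⁻¹ = b ^ k := fun k => by
        rw [(hab.zpow_right k).eq, mul_inv_cancel_right]
      constructor
      · rintro ⟨k, rfl⟩
        exact ⟨k, (hconj k).symm⟩
      · rintro ⟨k, hk⟩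
        change b ^ k = _ at hk
        rw [← hconj k] at hk
        exact ⟨k, mul_left_cancel (mul_right_cancel hk)⟩
  have hfin : Finite (zpowers a ⊔ zpowers b : Subgroup G) := by
    rw [← SetLike.coe_sort_coe, coe_mul_of_left_le_normalizer_right _ _ hnorm]
    exact ((finite_zpowers.mpr (isOfFinOrder_iff_pow_eq_one.mpr ⟨2, two_pos, ha⟩)).mul
      (finite_zpowers.mpr (isOfFinOrder_iff_pow_eq_one.mpr ⟨2, two_pos, hb⟩))).to_subtype
  by_contra! hne
  have := eq_of_ne_one_of_card_le_two (h _ hfin)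
    (a := ⟨a, mem_sup_left (mem_zpowers a)⟩) (b := ⟨b, mem_sup_right (mem_zpowers b)⟩)
    (by simpa [Subtype.ext_iff] using hne.1) (by simpa [Subtype.ext_iff] using hne.2.1)
  exact hne.2.2 (congrArg Subtype.val this)

theorem exists_mulEquiv_int_prod {g : G} (hgc : g ∈ center G) (hg : ¬IsOfFinOrder g)
    [(zpowers g).FiniteIndex] : ∃ T : Subgroup G, (∀ x, x ∈ T ↔ IsOfFinOrder x) ∧ Finite T ∧
      Nonempty (G ≃* Multiplicative ℤ × T) := by
  obtain ⟨φ, hφ⟩ := exists_monoidHom_int_ker_iff_isOfFinOrder hgc hg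
  have hφg : φ g ≠ 1 := fun h1 => hg ((hφ g).mp h1)
  have hfin : Finite φ.ker := finite_of_disjoint <| disjoint_def.mpr fun {x} hx hxg => by
    obtain ⟨k, rfl⟩ := mem_zpowers_iff.mp hxg
    rw [MonoidHom.mem_ker, map_zpow, IsMulTorsionFree.zpow_eq_one_iff_right hφg] at hx
    rw [hx, zpow_zero]
  refine ⟨φ.ker, hφ, hfin, φ.nonempty_mulEquiv_int_prod_ker (fun h1 => hφg ?_) ?_⟩
  · rw [h1, MonoidHom.one_apply]
  · exact φ.ker.le_center_of_card_le_two (h _ hfin)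

theorem nonempty_mulEquiv_of_mem_center {g : G} (hgc : g ∈ center G) (hg : ¬IsOfFinOrder g)
    [(zpowers g).FiniteIndex] : Nonempty (G ≃* Multiplicative ℤ) ∨
      Nonempty (G ≃* Multiplicative ℤ × Multiplicative (ZMod 2)) := by
  obtain ⟨T, -, hTfin, ⟨e⟩⟩ := h.exists_mulEquiv_int_prod hgc hg
  have hpos : 0 < Nat.card T := Nat.card_pos
  have hle := h T hTfin
  interval_cases hc : Nat.card T
  · obtain rfl := card_eq_one.mp hc
    exact .inl ⟨e.trans MulEquiv.prodUnique⟩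
  · have : Fact (Nat.Prime 2) := Nat.fact_prime_two
    exact .inr ⟨e.trans ((MulEquiv.refl _).prodCongr (mulEquivOfPrimeCardEq hc (by simp)))⟩

section ConjInv

variable {z s : G} (hz : ¬IsOfFinOrder z) (hs : s * z * s⁻¹ = z⁻¹)
include hz hs

theorem mul_self_eq_one_of_conj_eq_inv [(zpowers z).Normal] [(zpowers z).FiniteIndex] :
    s * s = 1 := by
  -- `(s * s) ^ [G : ⟨z⟩]` lies in `⟨z⟩` and commutes with `s`, which inverts `⟨z⟩`; so it is `1`.
  have hcomm : Commute s ((s * s) ^ (zpowers z).index) :=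
    ((Commute.refl s).mul_right (Commute.refl s)).pow_right _
  have hone := eq_one_of_commute_of_conj_eq_inv hz hs ((zpowers z).pow_index_mem _) hcomm
  rw [← sq, ← pow_mul] at hone
  rw [← sq]
  exact h.pow_two_eq_one (isOfFinOrder_iff_pow_eq_one.mpr
    ⟨_, Nat.mul_pos two_pos (zpowers z).index_ne_zero_of_finite.bot_lt, hone⟩)

theorem exists_zpowers_eq_centralizer [(zpowers z).FiniteIndex] (hss : s * s = 1) :
    ∃ w : G, ¬IsOfFinOrder w ∧ zpowers w = centralizer {z} := by
  set N := centralizer {z}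
  let z' : N := ⟨z, mem_centralizer_singleton_iff.mpr rfl⟩
  have hz'c : z' ∈ center N :=
    mem_center_iff.mpr fun n => Subtype.ext (mem_centralizer_singleton_iff.mp n.2)
  have hz' : ¬IsOfFinOrder z' := by rwa [← Submonoid.isOfFinOrder_coe]
  have : zpowers z' = (zpowers z).subgroupOf N := by
    ext x
    simp [mem_subgroupOf, mem_zpowers_iff, Subtype.ext_iff, z']
  have : (zpowers z').FiniteIndex := this ▸ inferInstance
  obtain ⟨T, hT, hTfin, ⟨e⟩⟩ := (h.subgroup N).exists_mulEquiv_int_prod hz'c hz'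
  -- A torsion element `t ≠ 1` of `N` would be the only nontrivial one, so `s` would centralize it
  -- and `s`, `t` would generate a Klein four-group.
  have hT : T = ⊥ := by
    refine (eq_bot_iff_forall T).mpr fun t ht => by_contra fun ht1 => ?_
    have hsN := notMem_centralizer_of_conj_eq_inv hs hz
    have htors : IsOfFinOrder (t : G) := Submonoid.isOfFinOrder_coe.mpr ((hT t).mp ht)
    let u : N := ⟨s * t * s⁻¹, conj_mem_centralizer_of_conj_eq_inv hs t.2⟩
    have hu : u ∈ T := (hT u).mpr <| Submonoid.isOfFinOrder_coe.mp <|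
      (MulAut.conj s).toMonoidHom.isOfFinOrder htors
    have hu1 : (⟨u, hu⟩ : T) ≠ 1 := fun h1 => ht1 <| Subtype.ext <| by
      have : s * (t : G) * s⁻¹ = 1 := congrArg (fun x : T => ((x : N) : G)) h1
      rwa [mul_inv_eq_one, mul_eq_left] at this
    have hut := eq_of_ne_one_of_card_le_two (h.subgroup N T hTfin) hu1
      (b := ⟨t, ht⟩) fun h1 => ht1 (congrArg Subtype.val h1)
    have hst : Commute s t :=
      mul_inv_eq_iff_eq_mul.mp (congrArg (fun x : T => ((x : N) : G)) hut)
    rcases h.eq_of_commute hst (by rw [sq, hss]) (h.pow_two_eq_one htors) with h1 | h1 | h1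
    · exact hsN (h1 ▸ N.one_mem)
    · exact ht1 (Subtype.ext h1)
    · exact hsN (h1 ▸ t.2)
  subst hT
  exact N.exists_zpowers_eq_of_mulEquiv_int (e.trans MulEquiv.prodUnique)

end ConjInv

theorem nonempty_mulEquiv_dihedralGroup_zero_of_notMem_center {z : G} (hz : ¬IsOfFinOrder z)
    [(zpowers z).Normal] [(zpowers z).FiniteIndex] (hzc : z ∉ center G) :
    Nonempty (G ≃* DihedralGroup 0) := by
  obtain ⟨s, hs⟩ := exists_conj_eq_inv hz hzc
  have hss := h.mul_self_eq_one_of_conj_eq_inv hz hs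
  obtain ⟨w, hw, hwN⟩ := h.exists_zpowers_eq_centralizer hz hs hss
  have hsN := notMem_centralizer_of_conj_eq_inv hs hz
  have hsw : s * w * s⁻¹ = w⁻¹ := by
    have hmem : s * w * s⁻¹ ∈ zpowers w :=
      hwN ▸ conj_mem_centralizer_of_conj_eq_inv hs (hwN ▸ mem_zpowers w)
    have hsinv : s⁻¹ = s := inv_eq_of_mul_eq_one_right hss
    refine (conj_eq_self_or_eq_inv hw hmem (by rwa [hsinv] at hmem ⊢)).resolve_left
      fun hsw => hsN ?_
    have hzw : z ∈ zpowers w := hwN ▸ mem_centralizer_singleton_iff.mpr rfl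
    obtain ⟨k, hk⟩ := mem_zpowers_iff.mp hzw
    rw [mem_centralizer_singleton_iff, ← hk]
    exact (Commute.zpow_right (mul_inv_eq_iff_eq_mul.mp hsw) k).eq
  refine nonempty_mulEquiv_dihedralGroup_zero hw hss hsw (hwN ▸ hsN) fun x => hwN ▸ ?_
  exact mem_centralizer_or_mul_mem_centralizer hs hz x

theorem nonempty_mulEquiv_of_virtuallyCyclic [Infinite G] (hvc : VirtuallyCyclic G) :
    Nonempty (G ≃* Multiplicative ℤ) ∨
    Nonempty (G ≃* Multiplicative ℤ × Multiplicative (ZMod 2)) ∨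
    Nonempty (G ≃* DihedralGroup 0) := by
  obtain ⟨z, hz, _, _⟩ := hvc.exists_zpowers
  by_cases hzc : z ∈ center G
  · exact (h.nonempty_mulEquiv_of_mem_center hzc hz).imp_right .inl
  · exact .inr (.inr (h.nonempty_mulEquiv_dihedralGroup_zero_of_notMem_center hz hzc))

end

end FiniteSubgroupsCardLe

end

/-- If every finite subgroup of `G` has order at most 2, then every infinite virtually cyclic
subgroup of `G` is isomorphic to `ℤ`, to `ℤ × ℤ/2ℤ`, or to the infinite dihedral group
`D_ℤ = ℤ ⋊ ℤ/2ℤ` (which is `DihedralGroup 0` in Mathlib). -/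
theorem stmt_12 {G : Type*} [Group G]
    (hfin : ∀ F : Subgroup G, Finite F → Nat.card F ≤ 2)
    (K : Subgroup G) (hinf : Infinite K) (hvc : VirtuallyCyclic K) :
    Nonempty (K ≃* Multiplicative ℤ) ∨
    Nonempty (K ≃* Multiplicative ℤ × Multiplicative (ZMod 2)) ∨
    Nonempty (K ≃* DihedralGroup 0) :=
  FiniteSubgroupsCardLe.subgroup hfin K |>.nonempty_mulEquiv_of_virtuallyCyclic hvc
end
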